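/- Let T > 0, ε₀ ∈ ℝ, and let v = (v₁,v₂) : ℝ² × (0,T) → ℝ², P : ℝ² × (0,T) → ℝ, u = (u₁,u₂,u₃) : ℝ² × (0,T) → ℝ³ be of class C² in x and C¹ in t, satisfying at every point (x,t) with x₂ ≥ 0: ∂_t v + (v·∇)v + ∇P = Δv − ε₀ ∇·(∇u ⊙ ∇u − (1/2)|∇u|² 𝕀₂), ∇·v = 0, and ∂_t u + (v·∇)u = Δu + |∇u|² u; and satisfying at every boundary point (x₁, 0, t): ∂_{x₂}v₁ = 0, v₂ = 0, ∂_{x₂}u₁ = 0, ∂_{x₂}u₂ = 0, and u₃ = 0. Then ∂_{x₂}P(x₁, 0, t) = 0 for all x₁ ∈ ℝ and t ∈ (0,T). -/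

import Mathlib

/-- Partial derivative in the first spatial variable. -/
noncomputable def pd1 (f : ℝ → ℝ → ℝ) (x y : ℝ) : ℝ := deriv (fun s => f s y) x

/-- Partial derivative in the second spatial variable. -/
noncomputable def pd2 (f : ℝ → ℝ → ℝ) (x y : ℝ) : ℝ := deriv (fun s => f x s) y

/-- The `i`-th spatial partial derivative, `i : Fin 2`. -/
noncomputable def pdi (i : Fin 2) (f : ℝ → ℝ → ℝ) (x y : ℝ) : ℝ :=
  if i = 0 then pd1 f x y else pd2 f x y

/-- The Laplacian on `ℝ²`. -/
noncomputable def lapl (f : ℝ → ℝ → ℝ) (x y : ℝ) : ℝ :=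
  pd1 (pd1 f) x y + pd2 (pd2 f) x y

/-- `|∇u|²` for a map into `ℝ³`. -/
noncomputable def gradSq3 (u : Fin 3 → ℝ → ℝ → ℝ) (x y : ℝ) : ℝ :=
  ∑ k : Fin 3, ((pd1 (u k) x y) ^ 2 + (pd2 (u k) x y) ^ 2)

/-!
At a boundary point every term of the normal momentum equation other than `∂₂P` vanishes.
Since `v₂ ≡ 0` on the boundary, `∂ₜv₂`, the transport terms and `∂₁²v₂` vanish there, and
differentiating `∂₁v₁ + ∂₂v₂ = 0` in the normal direction on the closed half-plane gives
`∂₂²v₂ = -∂₂∂₁v₁ = -∂₁∂₂v₁ = 0`, so `Δv₂ = 0`. For the stress, the boundary conditions make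
`σ₂₁ = Σₖ ∂₂uₖ ∂₁uₖ` vanish along the boundary, and
`∂₂σ₂₂ = Σₖ (∂₂uₖ ∂₂²uₖ - ∂₁uₖ ∂₁∂₂uₖ)` vanishes term by term once `∂₂²u₃ = 0` is read off
from the director equation at the boundary. (Indices here are the paper's: `v₂` is `v 1`,
`u₃` is `u 2`.)
-/

open Set

section PartialDerivatives

variable {E : Type*} [NormedAddCommGroup E] [NormedSpace ℝ E]

theorem hasDerivAt_fst_of_differentiableAt {Φ : ℝ × ℝ → E} {x y : ℝ}
    (hΦ : DifferentiableAt ℝ Φ (x, y)) :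
    HasDerivAt (fun a => Φ (a, y)) (fderiv ℝ Φ (x, y) (1, 0)) x :=
  hΦ.hasFDerivAt.comp_hasDerivAt x ((hasDerivAt_id x).prodMk (hasDerivAt_const x y))

theorem hasDerivAt_snd_of_differentiableAt {Φ : ℝ × ℝ → E} {x y : ℝ}
    (hΦ : DifferentiableAt ℝ Φ (x, y)) :
    HasDerivAt (fun b => Φ (x, b)) (fderiv ℝ Φ (x, y) (0, 1)) y :=
  hΦ.hasFDerivAt.comp_hasDerivAt y ((hasDerivAt_const y x).prodMk (hasDerivAt_id y))

variable {f g : ℝ → ℝ → ℝ} {x y : ℝ}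

theorem pd1_eq_fderiv (hf : DifferentiableAt ℝ (fun p : ℝ × ℝ => f p.1 p.2) (x, y)) :
    pd1 f x y = fderiv ℝ (fun p : ℝ × ℝ => f p.1 p.2) (x, y) (1, 0) :=
  (hasDerivAt_fst_of_differentiableAt hf).deriv

theorem pd2_eq_fderiv (hf : DifferentiableAt ℝ (fun p : ℝ × ℝ => f p.1 p.2) (x, y)) :
    pd2 f x y = fderiv ℝ (fun p : ℝ × ℝ => f p.1 p.2) (x, y) (0, 1) :=
  (hasDerivAt_snd_of_differentiableAt hf).deriv

theorem hasDerivAt_pd2 (hf : DifferentiableAt ℝ (fun p : ℝ × ℝ => f p.1 p.2) (x, y)) :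
    HasDerivAt (f x) (pd2 f x y) y :=
  pd2_eq_fderiv hf ▸ hasDerivAt_snd_of_differentiableAt hf

theorem pd1_eq_zero_of_forall (hg : ∀ a, g a y = 0) (x : ℝ) : pd1 g x y = 0 := by
  simp [pd1, hg]

theorem contDiff_pd1 {n : WithTop ℕ∞} (hf : ContDiff ℝ (n + 1) (fun p : ℝ × ℝ => f p.1 p.2)) :
    ContDiff ℝ n (fun p : ℝ × ℝ => pd1 f p.1 p.2) := by
  have hd := hf.differentiable (by simp)
  simp only [pd1_eq_fderiv (hd _)]
  exact (hf.fderiv_right le_rfl).clm_apply contDiff_const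

theorem contDiff_pd2 {n : WithTop ℕ∞} (hf : ContDiff ℝ (n + 1) (fun p : ℝ × ℝ => f p.1 p.2)) :
    ContDiff ℝ n (fun p : ℝ × ℝ => pd2 f p.1 p.2) := by
  have hd := hf.differentiable (by simp)
  simp only [pd2_eq_fderiv (hd _)]
  exact (hf.fderiv_right le_rfl).clm_apply contDiff_const

theorem hasDerivAt_pd2_pd1 (hf : ContDiff ℝ 2 (fun p : ℝ × ℝ => f p.1 p.2)) (x y : ℝ) :
    HasDerivAt (pd1 f x) (pd2 (pd1 f) x y) y :=
  hasDerivAt_pd2 ((contDiff_pd1 (n := 1) hf).differentiable one_ne_zero _)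

theorem hasDerivAt_pd2_pd2 (hf : ContDiff ℝ 2 (fun p : ℝ × ℝ => f p.1 p.2)) (x y : ℝ) :
    HasDerivAt (pd2 f x) (pd2 (pd2 f) x y) y :=
  hasDerivAt_pd2 ((contDiff_pd2 (n := 1) hf).differentiable one_ne_zero _)

theorem pd2_pd1_eq_pd1_pd2 (hf : ContDiff ℝ 2 (fun p : ℝ × ℝ => f p.1 p.2)) (x y : ℝ) :
    pd2 (pd1 f) x y = pd1 (pd2 f) x y := by
  set F := fun p : ℝ × ℝ => f p.1 p.2
  have hd : Differentiable ℝ F := hf.differentiable (by simp)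
  have hd2 : Differentiable ℝ (fderiv ℝ F) :=
    (hf.fderiv_right (m := 1) (by norm_num)).differentiable (by simp)
  have h21 : pd2 (pd1 f) x y = fderiv ℝ (fderiv ℝ F) (x, y) (0, 1) (1, 0) := by
    simp only [pd2, pd1_eq_fderiv (hd _)]
    simpa using ((hasDerivAt_snd_of_differentiableAt (hd2 (x, y))).clm_apply
      (hasDerivAt_const y ((1, 0) : ℝ × ℝ))).deriv
  have h12 : pd1 (pd2 f) x y = fderiv ℝ (fderiv ℝ F) (x, y) (1, 0) (0, 1) := by
    simp only [pd1, pd2_eq_fderiv (hd _)]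
    simpa using ((hasDerivAt_fst_of_differentiableAt (hd2 (x, y))).clm_apply
      (hasDerivAt_const x ((0, 1) : ℝ × ℝ))).deriv
  rw [h21, h12, hf.contDiffAt.isSymmSndFDerivAt (by simp)]

theorem pd2_pd1_eq_zero_of_forall (hf : ContDiff ℝ 2 (fun p : ℝ × ℝ => f p.1 p.2))
    (h : ∀ a, pd2 f a y = 0) (x : ℝ) : pd2 (pd1 f) x y = 0 := by
  rw [pd2_pd1_eq_pd1_pd2 hf]
  exact pd1_eq_zero_of_forall h x

end PartialDerivatives

theorem HasDerivAt.eq_zero_of_eqOn_Ici {F : ℝ → ℝ} {c y : ℝ} (hF : HasDerivAt F c y)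
    (h : EqOn F 0 (Ici y)) : c = 0 :=
  (uniqueDiffOn_Ici y y self_mem_Ici).eq_deriv _ hF.hasDerivWithinAt
    ((hasDerivWithinAt_const y _ 0).congr h (h self_mem_Ici))

theorem lapl_eq_zero_of_divFree {V₀ V₁ : ℝ → ℝ → ℝ}
    (hV₀ : ContDiff ℝ 2 (fun p : ℝ × ℝ => V₀ p.1 p.2))
    (hV₁ : ContDiff ℝ 2 (fun p : ℝ × ℝ => V₁ p.1 p.2)) {x : ℝ}
    (hdiv : ∀ b, 0 ≤ b → pd1 V₀ x b + pd2 V₁ x b = 0)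
    (hV₀_bdry : ∀ a, pd2 V₀ a 0 = 0) (hV₁_bdry : ∀ a, V₁ a 0 = 0) :
    lapl V₁ x 0 = 0 := by
  have h11 : pd1 (pd1 V₁) x 0 = 0 :=
    pd1_eq_zero_of_forall (pd1_eq_zero_of_forall hV₁_bdry) x
  have h21 : pd2 (pd1 V₀) x 0 = 0 := pd2_pd1_eq_zero_of_forall hV₀ hV₀_bdry x
  have hsum : pd2 (pd1 V₀) x 0 + pd2 (pd2 V₁) x 0 = 0 :=
    ((hasDerivAt_pd2_pd1 hV₀ x 0).add (hasDerivAt_pd2_pd2 hV₁ x 0)).eq_zero_of_eqOn_Ici hdiv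
  rw [lapl, h11]
  linarith

noncomputable def stress (U : Fin 3 → ℝ → ℝ → ℝ) (i j : Fin 2) (a b : ℝ) : ℝ :=
  (∑ k : Fin 3, pdi i (U k) a b * pdi j (U k) a b)
    - (if i = j then (1 / 2) * gradSq3 U a b else 0)

section Stress

variable {U : Fin 3 → ℝ → ℝ → ℝ}

theorem stress_one_zero (a b : ℝ) :
    stress U 1 0 a b = ∑ k, pd2 (U k) a b * pd1 (U k) a b := by
  simp [stress, pdi]

theorem stress_one_one (a b : ℝ) :
    stress U 1 1 a b = ∑ k, (pd2 (U k) a b ^ 2 - pd1 (U k) a b ^ 2) / 2 := by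
  simp only [stress, pdi, one_ne_zero, ↓reduceIte, Fin.sum_univ_three, gradSq3]
  ring

theorem hasDerivAt_stress_one_one (hU : ∀ k, ContDiff ℝ 2 (fun p : ℝ × ℝ => U k p.1 p.2))
    (x y : ℝ) :
    HasDerivAt (stress U 1 1 x)
      (∑ k, (pd2 (U k) x y * pd2 (pd2 (U k)) x y - pd1 (U k) x y * pd2 (pd1 (U k)) x y)) y := by
  rw [funext (stress_one_one x)]
  refine HasDerivAt.fun_sum fun k _ => ?_
  have h₂ := hasDerivAt_pd2_pd2 (hU k) x y
  have h₁ := hasDerivAt_pd2_pd1 (hU k) x y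
  exact (((h₂.pow 2).sub (h₁.pow 2)).div_const 2).congr_deriv (by push_cast; ring)

theorem sum_pdi_stress_one_eq_zero (hU : ∀ k, ContDiff ℝ 2 (fun p : ℝ × ℝ => U k p.1 p.2))
    (hU₀ : ∀ a, pd2 (U 0) a 0 = 0) (hU₁ : ∀ a, pd2 (U 1) a 0 = 0) (hU₂ : ∀ a, U 2 a 0 = 0)
    {x : ℝ} (hU₂_nn : pd2 (pd2 (U 2)) x 0 = 0) :
    ∑ j, pdi j (stress U 1 j) x 0 = 0 := by
  have hU₂_t : ∀ a, pd1 (U 2) a 0 = 0 := pd1_eq_zero_of_forall hU₂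
  have h₀ : pd1 (stress U 1 0) x 0 = 0 := pd1_eq_zero_of_forall (fun a => by
    simp [stress_one_zero, Fin.sum_univ_three, hU₀, hU₁, hU₂_t]) x
  have h₁ : pd2 (stress U 1 1) x 0 = 0 := by
    rw [pd2, (hasDerivAt_stress_one_one hU x 0).deriv]
    simp [Fin.sum_univ_three, hU₀, hU₁, hU₂_t, hU₂_nn, pd2_pd1_eq_zero_of_forall (hU 0) hU₀,
      pd2_pd1_eq_zero_of_forall (hU 1) hU₁]
  simp [pdi, h₀, h₁]

end Stress

theorem stmt10_general (T ε₀ : ℝ)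
    (v : Fin 2 → ℝ → ℝ → ℝ → ℝ) (P : ℝ → ℝ → ℝ → ℝ) (u : Fin 3 → ℝ → ℝ → ℝ → ℝ)
    (hvx : ∀ i, ∀ t ∈ Set.Ioo (0 : ℝ) T, ContDiff ℝ 2 (fun p : ℝ × ℝ => v i p.1 p.2 t))
    (hux : ∀ k, ∀ t ∈ Set.Ioo (0 : ℝ) T, ContDiff ℝ 2 (fun p : ℝ × ℝ => u k p.1 p.2 t))
    (hmom : ∀ x₁ x₂ : ℝ, 0 ≤ x₂ → ∀ t ∈ Set.Ioo (0 : ℝ) T, ∀ i : Fin 2,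
      deriv (fun s => v i x₁ x₂ s) t
          + v 0 x₁ x₂ t * pd1 (fun a b => v i a b t) x₁ x₂
          + v 1 x₁ x₂ t * pd2 (fun a b => v i a b t) x₁ x₂
          + pdi i (fun a b => P a b t) x₁ x₂
        = lapl (fun a b => v i a b t) x₁ x₂
          - ε₀ * ∑ j : Fin 2, pdi j (fun a b =>
              (∑ k : Fin 3, pdi i (fun a' b' => u k a' b' t) a b *
                  pdi j (fun a' b' => u k a' b' t) a b)
                - (if i = j then (1 / 2) * gradSq3 (fun k a' b' => u k a' b' t) a b
                   else 0)) x₁ x₂)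
    (hdiv : ∀ x₁ x₂ : ℝ, 0 ≤ x₂ → ∀ t ∈ Set.Ioo (0 : ℝ) T,
      pd1 (fun a b => v 0 a b t) x₁ x₂ + pd2 (fun a b => v 1 a b t) x₁ x₂ = 0)
    (hflow : ∀ x₁ x₂ : ℝ, 0 ≤ x₂ → ∀ t ∈ Set.Ioo (0 : ℝ) T, ∀ k : Fin 3,
      deriv (fun s => u k x₁ x₂ s) t
          + v 0 x₁ x₂ t * pd1 (fun a b => u k a b t) x₁ x₂
          + v 1 x₁ x₂ t * pd2 (fun a b => u k a b t) x₁ x₂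
        = lapl (fun a b => u k a b t) x₁ x₂
          + gradSq3 (fun k a b => u k a b t) x₁ x₂ * u k x₁ x₂ t)
    (hbc : ∀ x₁ : ℝ, ∀ t ∈ Set.Ioo (0 : ℝ) T,
      pd2 (fun a b => v 0 a b t) x₁ 0 = 0 ∧ v 1 x₁ 0 t = 0 ∧
      pd2 (fun a b => u 0 a b t) x₁ 0 = 0 ∧ pd2 (fun a b => u 1 a b t) x₁ 0 = 0 ∧
      u 2 x₁ 0 t = 0) :
    ∀ x₁ : ℝ, ∀ t ∈ Set.Ioo (0 : ℝ) T, pd2 (fun a b => P a b t) x₁ 0 = 0 := by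
  intro x₁ t ht
  have hdt {g : ℝ → ℝ} (hg : EqOn g 0 (Ioo 0 T)) : deriv g t = 0 :=
    (hg.deriv isOpen_Ioo ht).trans (deriv_const t 0)
  have hv₁ a : v 1 a 0 t = 0 := (hbc a t ht).2.1
  have hu₂ a : u 2 a 0 t = 0 := (hbc a t ht).2.2.2.2
  have hu₂_t := pd1_eq_zero_of_forall (g := fun a b => u 2 a b t) hu₂
  have hu₂_nn : pd2 (pd2 fun a b => u 2 a b t) x₁ 0 = 0 := by
    have h := hflow x₁ 0 le_rfl t ht 2
    rw [hdt fun s hs => (hbc x₁ s hs).2.2.2.2, hv₁, hu₂, lapl, hu₂_t,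
      pd1_eq_zero_of_forall hu₂_t] at h
    linarith
  have hlap : lapl (fun a b => v 1 a b t) x₁ 0 = 0 :=
    lapl_eq_zero_of_divFree (hvx 0 t ht) (hvx 1 t ht) (fun b hb => hdiv x₁ b hb t ht)
      (fun a => (hbc a t ht).1) hv₁
  have hstress : ∑ j, pdi j (stress (fun k a b => u k a b t) 1 j) x₁ 0 = 0 :=
    sum_pdi_stress_one_eq_zero (hux · t ht) (fun a => (hbc a t ht).2.2.1)
      (fun a => (hbc a t ht).2.2.2.1) hu₂ hu₂_nn
  -- the `i = 1` momentum equation, with its stress term folded into `stress`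
  have h : _ = lapl (fun a b => v 1 a b t) x₁ 0
      - ε₀ * ∑ j, pdi j (stress (fun k a b => u k a b t) 1 j) x₁ 0 :=
    hmom x₁ 0 le_rfl t ht 1
  rw [hdt fun s hs => (hbc x₁ s hs).2.1, hv₁, hlap, hstress,
    pd1_eq_zero_of_forall (g := fun a b => v 1 a b t) hv₁] at h
  simpa [pdi] using h

/-- If `(v,P,u)` solves the full nematic liquid crystal system on the closed upper
half-plane with the partially free boundary conditions
`∂_{x₂}v₁ = v₂ = ∂_{x₂}u₁ = ∂_{x₂}u₂ = u₃ = 0` on `{x₂ = 0}`, then the normal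
derivative of the pressure vanishes on the boundary: `∂_{x₂}P(x₁,0,t) = 0`. -/
theorem stmt10 (T ε₀ : ℝ) (hT : 0 < T)
    (v : Fin 2 → ℝ → ℝ → ℝ → ℝ) (P : ℝ → ℝ → ℝ → ℝ) (u : Fin 3 → ℝ → ℝ → ℝ → ℝ)
    (hvx : ∀ i, ∀ t ∈ Set.Ioo (0 : ℝ) T, ContDiff ℝ 2 (fun p : ℝ × ℝ => v i p.1 p.2 t))
    (hPx : ∀ t ∈ Set.Ioo (0 : ℝ) T, ContDiff ℝ 2 (fun p : ℝ × ℝ => P p.1 p.2 t))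
    (hux : ∀ k, ∀ t ∈ Set.Ioo (0 : ℝ) T, ContDiff ℝ 2 (fun p : ℝ × ℝ => u k p.1 p.2 t))
    (hvt : ∀ i x₁ x₂, ContDiffOn ℝ 1 (fun t => v i x₁ x₂ t) (Set.Ioo (0 : ℝ) T))
    (hPt : ∀ x₁ x₂, ContDiffOn ℝ 1 (fun t => P x₁ x₂ t) (Set.Ioo (0 : ℝ) T))
    (hut : ∀ k x₁ x₂, ContDiffOn ℝ 1 (fun t => u k x₁ x₂ t) (Set.Ioo (0 : ℝ) T))
    (hmom : ∀ x₁ x₂ : ℝ, 0 ≤ x₂ → ∀ t ∈ Set.Ioo (0 : ℝ) T, ∀ i : Fin 2,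
      deriv (fun s => v i x₁ x₂ s) t
          + v 0 x₁ x₂ t * pd1 (fun a b => v i a b t) x₁ x₂
          + v 1 x₁ x₂ t * pd2 (fun a b => v i a b t) x₁ x₂
          + pdi i (fun a b => P a b t) x₁ x₂
        = lapl (fun a b => v i a b t) x₁ x₂
          - ε₀ * ∑ j : Fin 2, pdi j (fun a b =>
              (∑ k : Fin 3, pdi i (fun a' b' => u k a' b' t) a b *
                  pdi j (fun a' b' => u k a' b' t) a b)
                - (if i = j then (1 / 2) * gradSq3 (fun k a' b' => u k a' b' t) a b
                   else 0)) x₁ x₂)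
    (hdiv : ∀ x₁ x₂ : ℝ, 0 ≤ x₂ → ∀ t ∈ Set.Ioo (0 : ℝ) T,
      pd1 (fun a b => v 0 a b t) x₁ x₂ + pd2 (fun a b => v 1 a b t) x₁ x₂ = 0)
    (hflow : ∀ x₁ x₂ : ℝ, 0 ≤ x₂ → ∀ t ∈ Set.Ioo (0 : ℝ) T, ∀ k : Fin 3,
      deriv (fun s => u k x₁ x₂ s) t
          + v 0 x₁ x₂ t * pd1 (fun a b => u k a b t) x₁ x₂
          + v 1 x₁ x₂ t * pd2 (fun a b => u k a b t) x₁ x₂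
        = lapl (fun a b => u k a b t) x₁ x₂
          + gradSq3 (fun k a b => u k a b t) x₁ x₂ * u k x₁ x₂ t)
    (hbc : ∀ x₁ : ℝ, ∀ t ∈ Set.Ioo (0 : ℝ) T,
      pd2 (fun a b => v 0 a b t) x₁ 0 = 0 ∧ v 1 x₁ 0 t = 0 ∧
      pd2 (fun a b => u 0 a b t) x₁ 0 = 0 ∧ pd2 (fun a b => u 1 a b t) x₁ 0 = 0 ∧
      u 2 x₁ 0 t = 0) :
    ∀ x₁ : ℝ, ∀ t ∈ Set.Ioo (0 : ℝ) T, pd2 (fun a b => P a b t) x₁ 0 = 0 :=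
  stmt10_general T ε₀ v P u hvx hux hmom hdiv hflow hbc
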